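/- Lower bound on Herbrand complexity for the linear sequents: for every N ≥ 1 and every finite set T of ground terms (over a signature containing the constant a anf the unary function symbol f), if the sequent P(a), (P(t) ⊃ P(f(t)))_{t ∈ T} ⊢ P(f^N(a)) is a tautology, then |T| ≥ N. Consequently every Herbrand-sequent of P(a), ∀x (P(x) ⊃ P(f(x))) ⊢ P(f^N(a)) has at least N instances, and hence every cut-free proof of this sequent uses at least N quantifier inferences. -/
import Mathlib


open FirstOrder Language

/-- The ground term `fⁱ(a)`. -/
def iterTerm (L : FirstOrder.Language) (ca : L.Constants) (ff : L.Functions 1) :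
    ℕ → L.Term Empty
  | 0 => ca.term
  | i + 1 => Term.func ff ![iterTerm L ca ff i]

open Classical in
/-- Interpretation of function symbols on ℕ: `ff` is successor, everything else is 0. -/
noncomputable def myFun (L : FirstOrder.Language) (ff : L.Functions 1) :
    ∀ {n : ℕ}, L.Functions n → (Fin n → ℕ) → ℕ :=
  fun {n} g v => if h : n = 1 then (if h ▸ g = ff then v ⟨0, by omega⟩ + 1 else 0) else 0

/-- The structure on ℕ where every relation holds exactly on tuples of values `≤ k`. -/
noncomputable def myStr (L : FirstOrder.Language) (ff : L.Functions 1) (k : ℕ) :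
    L.Structure ℕ where
  funMap := myFun L ff
  RelMap := fun {_} _ v => ∀ i, v i ≤ k

lemma realize_indep (L : FirstOrder.Language) (ff : L.Functions 1) (k k' : ℕ)
    (t : L.Term Empty) :
    @Term.realize L ℕ (myStr L ff k) Empty (fun x => x.elim) t
      = @Term.realize L ℕ (myStr L ff k') Empty (fun x => x.elim) t := by
  induction t with
  | var x => exact x.elim
  | func g args ih =>
      simp only [Term.realize_func]
      show myFun L ff g _ = myFun L ff g _
      congr 1
      funext i
      exact ih i

lemma realize_iterTerm (L : FirstOrder.Language) (ca : L.Constants) (ff : L.Functions 1)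
    (k : ℕ) (i : ℕ) :
    @Term.realize L ℕ (myStr L ff k) Empty (fun x => x.elim) (iterTerm L ca ff i) = i := by
  induction i with
  | zero =>
      simp only [iterTerm, Constants.term, Term.realize_func]
      show myFun L ff (n := 0) ca _ = 0
      simp [myFun]
  | succ i ih =>
      simp only [iterTerm, Term.realize_func]
      show myFun L ff (n := 1) ff _ = i + 1
      simp only [myFun, dif_pos rfl, if_pos rfl]
      simp [ih]

/-- **lower bound on Herbrand complexity for the linear sequents.**
For every `N ≥ 1` and every finite set `T` of ground terms (over a signature containing
the constant `a` and the unary function symbol `f`), if the sequent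
`P(a), (P(t) ⊃ P(f(t)))_{t ∈ T} ⊢ P(f^N(a))` is a tautology, then `|T| ≥ N`.
(Consequently every Herbrand-sequent of `P(a), ∀x (P(x) ⊃ P(f(x))) ⊢ P(f^N(a))` has at
least `N` instances, and every cut-free proof of this sequent uses at least `N`
quantifier inferences.) -/
theorem herbrand_lower_bound
    (L : FirstOrder.Language) (ca : L.Constants) (ff : L.Functions 1)
    (pP : L.Relations 1) (N : ℕ) (hN : 1 ≤ N)
    (T : Finset (L.Term Empty))
    (htaut : ∀ (M : Type) [L.Structure M] [Nonempty M],
        Structure.RelMap pP ![Term.realize (M := M) (fun x : Empty => x.elim)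
            (Constants.term ca)] →
        (∀ t ∈ T,
            Structure.RelMap pP ![Term.realize (M := M) (fun x : Empty => x.elim) t] →
            Structure.RelMap pP
              ![Term.realize (M := M) (fun x : Empty => x.elim) (Term.func ff ![t])]) →
        Structure.RelMap pP ![Term.realize (M := M) (fun x : Empty => x.elim)
            (iterTerm L ca ff N)]) :
    N ≤ T.card := by
  classical
  set val : L.Term Empty → ℕ :=
    fun t => @Term.realize L ℕ (myStr L ff 0) Empty (fun x => x.elim) t with hval
  have key : ∀ k ∈ Finset.range N, ∃ t ∈ T, val t = k := by
    intro k hk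
    rw [Finset.mem_range] at hk
    by_contra hcon
    push_neg at hcon
    letI : L.Structure ℕ := myStr L ff k
    have hconc := htaut ℕ ?_ ?_
    · have := hconc 0
      simp only [Matrix.cons_val_zero] at this
      rw [realize_iterTerm] at this
      omega
    · intro i
      have : @Term.realize L ℕ (myStr L ff k) Empty (fun x => x.elim) (Constants.term ca)
          = 0 := realize_iterTerm L ca ff k 0
      fin_cases i <;> simp [this]
    · intro t ht hP i
      fin_cases i
      have h1 := hP 0
      simp only [Matrix.cons_val_zero, Fin.mk_zero] at h1 ⊢
      have hne : @Term.realize L ℕ (myStr L ff k) Empty (fun x => x.elim) t ≠ k := by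
        rw [realize_indep L ff k 0 t]
        exact hcon t ht
      have hsucc : @Term.realize L ℕ (myStr L ff k) Empty (fun x => x.elim)
          (Term.func ff ![t])
          = @Term.realize L ℕ (myStr L ff k) Empty (fun x => x.elim) t + 1 := by
        simp only [Term.realize_func]
        show myFun L ff (n := 1) ff _ = _
        simp only [myFun, dif_pos rfl, if_pos rfl]
        simp
      rw [hsucc]
      omega
  have hsub : Finset.range N ⊆ T.image val := by
    intro k hk
    obtain ⟨t, ht, hv⟩ := key k hk
    exact Finset.mem_image.2 ⟨t, ht, hv⟩
  calc N = (Finset.range N).card := (Finset.card_range N).symm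
    _ ≤ (T.image val).card := Finset.card_le_card hsub
    _ ≤ T.card := Finset.card_image_le
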